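/- arXiv:1710.09594 — 8 statements merged into one kernel-verified Lean document; each statement's English description precedes it below -/
import Mathlib

section
/- Let G be a group and g0, g1, g2 ∈ G satisfying g1*g2 = g2*g1, (g0*g1)^2 = (g1*g0)^2, (g0*g2)^2 = (g2*g0)^2, and the equation g0⁻¹*g2⁻¹*g0*g2*g0*(g1*g0*g1⁻¹) = (g1*g0*g1⁻¹)*(g2*g0*g2⁻¹). Then (g1*g0*g1⁻¹)*(g2*g0*g2⁻¹) = (g2*g0*g2⁻¹)*(g1*g0*g1⁻¹). -/
theorem inv_mul_inv_mul_mul_mul_mul_eq_conj_of_sq_mul_comm {G : Type*} [Group G] {a b : G}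
    (h : (a * b) ^ 2 = (b * a) ^ 2) : a⁻¹ * b⁻¹ * a * b * a = b * a * b⁻¹ :=
  calc a⁻¹ * b⁻¹ * a * b * a = a⁻¹ * b⁻¹ * (a * b) ^ 2 * b⁻¹ := by rw [sq]; group
    _ = a⁻¹ * b⁻¹ * (b * a) ^ 2 * b⁻¹ := by rw [h]
    _ = b * a * b⁻¹ := by rw [sq]; group

theorem stmt_2_general (G : Type*) [Group G] (g0 g1 g2 : G)
    (h02 : (g0 * g2) ^ 2 = (g2 * g0) ^ 2)
    (heq : g0⁻¹ * g2⁻¹ * g0 * g2 * g0 * (g1 * g0 * g1⁻¹)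
      = (g1 * g0 * g1⁻¹) * (g2 * g0 * g2⁻¹)) :
    (g1 * g0 * g1⁻¹) * (g2 * g0 * g2⁻¹) = (g2 * g0 * g2⁻¹) * (g1 * g0 * g1⁻¹) := by
  rwa [inv_mul_inv_mul_mul_mul_mul_eq_conj_of_sq_mul_comm h02, eq_comm] at heq

theorem stmt_2 (G : Type*) [Group G] (g0 g1 g2 : G)
    (h12 : g1 * g2 = g2 * g1)
    (h01 : (g0 * g1) ^ 2 = (g1 * g0) ^ 2)
    (h02 : (g0 * g2) ^ 2 = (g2 * g0) ^ 2)
    (heq : g0⁻¹ * g2⁻¹ * g0 * g2 * g0 * (g1 * g0 * g1⁻¹)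
      = (g1 * g0 * g1⁻¹) * (g2 * g0 * g2⁻¹)) :
    (g1 * g0 * g1⁻¹) * (g2 * g0 * g2⁻¹) = (g2 * g0 * g2⁻¹) * (g1 * g0 * g1⁻¹) :=
  stmt_2_general G g0 g1 g2 h02 heq
end

section
/- Let G be a group and a7, a8 ∈ G satisfying (a7*a8)^2 = (a8*a7)^2. Set t7 = a8⁻¹*a7*a8 and t8 = a7*a8*a7⁻¹. Then t7*t8*t7⁻¹ = a8. -/
/-! In any group `t7 * t8 * t7⁻¹` differs from `a8` only by a conjugate of
`(a7 * a8) ^ 2 * ((a8 * a7) ^ 2)⁻¹`, which the hypothesis makes trivial. -/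

lemma conj_mul_conj_mul_inv_conj {G : Type*} [Group G] (a b : G) :
    (b⁻¹ * a * b) * (a * b * a⁻¹) * (b⁻¹ * a * b)⁻¹ =
      b⁻¹ * ((a * b) ^ 2 * ((b * a) ^ 2)⁻¹) * b * b := by
  simp only [sq]
  group

theorem stmt_4 (G : Type*) [Group G] (a7 a8 t7 t8 : G)
    (h : (a7 * a8) ^ 2 = (a8 * a7) ^ 2)
    (ht7 : t7 = a8⁻¹ * a7 * a8)
    (ht8 : t8 = a7 * a8 * a7⁻¹) :
    t7 * t8 * t7⁻¹ = a8 := by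
  subst ht7 ht8
  rw [conj_mul_conj_mul_inv_conj, h, mul_inv_cancel, mul_one, inv_mul_cancel, one_mul]
end

section
/- Let G be a group and b1, b2, b3, b4 ∈ G satisfying: [bi, bj] = 1 for all 1 ≤ i < j ≤ 3; [bi*b4*bi⁻¹, bj*b4*bj⁻¹] = 1 for all 1 ≤ i < j ≤ 3; and (b4*bk)^2 = (bk*b4)^2 for k = 1, 2, 3. Then b3*b4*b2*b4*b1*b4*b3*b1⁻¹*b4*b1 = b2*b4*b2⁻¹*b3*b4*b2*b4*b1*b4*b3. -/
/-!
With `aᵢ = bᵢ b₄ bᵢ⁻¹`, the relations move the conjugates to the front: the left side becomes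
`a₃ a₂ w` and the right side `a₂ a₃ w`, where `w = b₂ b₃ b₄ b₁ b₄ b₃`, and `a₂`, `a₃` commute.
-/

section

variable {G : Type*} [Group G] {x y t : G}

theorem Commute.mul_mul_eq_conj_mul_mul (h : Commute x y) : x * t * y = x * t * x⁻¹ * y * x := by
  rw [mul_assoc (x * t * x⁻¹), ← h.eq]
  group

theorem Commute.mul_mul_mul_inv_mul_mul_eq_of_commute_conj (hxy : Commute x y)
    (hconj : Commute (x * t * x⁻¹) (y * t * y⁻¹)) :
    x * t * y * x⁻¹ * t * x = y * t * y⁻¹ * x * t * y :=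
  calc x * t * y * x⁻¹ * t * x = x * t * x⁻¹ * (y * t * x) := by
        rw [hxy.mul_mul_eq_conj_mul_mul]; group
    _ = x * t * x⁻¹ * (y * t * y⁻¹) * (x * y) := by
        rw [hxy.symm.mul_mul_eq_conj_mul_mul]; group
    _ = y * t * y⁻¹ * (x * t * x⁻¹) * (x * y) := by rw [hconj.eq]
    _ = y * t * y⁻¹ * x * t * y := by group

theorem mul_mul_mul_mul_inv_eq_of_mul_sq_eq_mul_sq (h : (t * x) ^ 2 = (x * t) ^ 2) :
    x * t * x * t * x⁻¹ = t * x * t :=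
  calc x * t * x * t * x⁻¹ = (x * t) ^ 2 * x⁻¹ := by rw [sq]; group
    _ = (t * x) ^ 2 * x⁻¹ := by rw [h]
    _ = t * x * t := by rw [sq]; group

end

theorem stmt_6_general (G : Type*) [Group G] (b1 b2 b3 b4 : G)
    (h13 : b1 * b3 = b3 * b1) (h23 : b2 * b3 = b3 * b2)
    (hB13 : (b1 * b4 * b1⁻¹) * (b3 * b4 * b3⁻¹) = (b3 * b4 * b3⁻¹) * (b1 * b4 * b1⁻¹))
    (hB23 : (b2 * b4 * b2⁻¹) * (b3 * b4 * b3⁻¹) = (b3 * b4 * b3⁻¹) * (b2 * b4 * b2⁻¹))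
    (hC3 : (b4 * b3) ^ 2 = (b3 * b4) ^ 2) :
    b3 * b4 * b2 * b4 * b1 * b4 * b3 * b1⁻¹ * b4 * b1
      = b2 * b4 * b2⁻¹ * b3 * b4 * b2 * b4 * b1 * b4 * b3 := by
  have h32 : Commute b3 b2 := h23.symm
  calc b3 * b4 * b2 * b4 * b1 * b4 * b3 * b1⁻¹ * b4 * b1
      = b3 * b4 * b2 * b4 * (b3 * b4 * b3⁻¹ * b1 * b4 * b3) := by
        rw [← Commute.mul_mul_mul_inv_mul_mul_eq_of_commute_conj h13 hB13]; group
    _ = b3 * b4 * b3⁻¹ * b2 * (b3 * b4 * b3 * b4 * b3⁻¹) * b1 * b4 * b3 := by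
        rw [h32.mul_mul_eq_conj_mul_mul]; group
    _ = b3 * b4 * b3⁻¹ * b2 * (b4 * b3 * b4) * b1 * b4 * b3 := by
        rw [mul_mul_mul_mul_inv_eq_of_mul_sq_eq_mul_sq hC3]
    _ = (b3 * b4 * b3⁻¹) * (b2 * b4 * b2⁻¹) * (b2 * b3 * b4 * b1 * b4 * b3) := by group
    _ = (b2 * b4 * b2⁻¹) * (b3 * b4 * b3⁻¹) * (b2 * b3 * b4 * b1 * b4 * b3) := by rw [hB23]
    _ = b2 * b4 * b2⁻¹ * (b3 * b4 * b3⁻¹ * b2 * b3) * b4 * b1 * b4 * b3 := by group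
    _ = b2 * b4 * b2⁻¹ * b3 * b4 * b2 * b4 * b1 * b4 * b3 := by
        rw [← h32.mul_mul_eq_conj_mul_mul]; group

theorem stmt_6 (G : Type*) [Group G] (b1 b2 b3 b4 : G)
    (h12 : b1 * b2 = b2 * b1) (h13 : b1 * b3 = b3 * b1) (h23 : b2 * b3 = b3 * b2)
    (hB12 : (b1 * b4 * b1⁻¹) * (b2 * b4 * b2⁻¹) = (b2 * b4 * b2⁻¹) * (b1 * b4 * b1⁻¹))
    (hB13 : (b1 * b4 * b1⁻¹) * (b3 * b4 * b3⁻¹) = (b3 * b4 * b3⁻¹) * (b1 * b4 * b1⁻¹))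
    (hB23 : (b2 * b4 * b2⁻¹) * (b3 * b4 * b3⁻¹) = (b3 * b4 * b3⁻¹) * (b2 * b4 * b2⁻¹))
    (hC1 : (b4 * b1) ^ 2 = (b1 * b4) ^ 2)
    (hC2 : (b4 * b2) ^ 2 = (b2 * b4) ^ 2)
    (hC3 : (b4 * b3) ^ 2 = (b3 * b4) ^ 2) :
    b3 * b4 * b2 * b4 * b1 * b4 * b3 * b1⁻¹ * b4 * b1
      = b2 * b4 * b2⁻¹ * b3 * b4 * b2 * b4 * b1 * b4 * b3 :=
  stmt_6_general G b1 b2 b3 b4 h13 h23 hB13 hB23 hC3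
end

section
/- Let G be a group and b1, b2, b3, b4 ∈ G satisfying: [bi, bj] = 1 for all 1 ≤ i < j ≤ 3; [bi*b4*bi⁻¹, bj*b4*bj⁻¹] = 1 for all 1 ≤ i < j ≤ 3; and (b4*bk)^2 = (bk*b4)^2 for k = 1, 2, 3. Then b4 = b3⁻¹*b1*b4*b3*b4*b1*b4*b1⁻¹*b4⁻¹*b3⁻¹*b4⁻¹*b1⁻¹*b3. -/
/-!
Relation (C) for `b1` lets one trade `b4 b1 b4 b1⁻¹` for `b1⁻¹ b4 b1 b4`; together with
`[b1, b3] = 1` this turns the right-hand side into `b3⁻¹ (A B A⁻¹) b3` with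
`A = b1 b4 b1⁻¹`, `B = b3 b4 b3⁻¹`, and relation (B) for `(1, 3)` says that `A` and `B` commute.
-/

theorem mul_mul_mul_inv_eq_of_sq_eq {G : Type*} [Group G] {a b : G}
    (h : (b * a) ^ 2 = (a * b) ^ 2) : b * a * b * a⁻¹ = a⁻¹ * b * a * b := by
  calc b * a * b * a⁻¹ = a⁻¹ * (a * b) ^ 2 * a⁻¹ := by rw [sq]; group
    _ = a⁻¹ * (b * a) ^ 2 * a⁻¹ := by rw [h]
    _ = a⁻¹ * b * a * b := by rw [sq]; group

theorem word_eq_conj_mul_conj_mul_inv {G : Type*} [Group G] {a b c : G}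
    (hab : (b * a) ^ 2 = (a * b) ^ 2) (hac : Commute a c) :
    a * b * c * b * a * b * a⁻¹ * b⁻¹ * c⁻¹ * b⁻¹ * a⁻¹
      = (a * b * a⁻¹) * (c * b * c⁻¹) * (a * b * a⁻¹)⁻¹ := by
  calc a * b * c * b * a * b * a⁻¹ * b⁻¹ * c⁻¹ * b⁻¹ * a⁻¹
      = a * b * c * (b * a * b * a⁻¹) * b⁻¹ * c⁻¹ * b⁻¹ * a⁻¹ := by group
    _ = a * b * (c * a⁻¹) * b * (a * c⁻¹) * b⁻¹ * a⁻¹ := by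
      rw [mul_mul_mul_inv_eq_of_sq_eq hab]; group
    _ = a * b * (a⁻¹ * c) * b * (c⁻¹ * a) * b⁻¹ * a⁻¹ := by
      rw [hac.inv_left.eq.symm, hac.inv_right.eq]
    _ = (a * b * a⁻¹) * (c * b * c⁻¹) * (a * b * a⁻¹)⁻¹ := by group

theorem stmt_7_general (G : Type*) [Group G] (b1 b3 b4 : G)
    (h13 : b1 * b3 = b3 * b1)
    (hB13 : (b1 * b4 * b1⁻¹) * (b3 * b4 * b3⁻¹) = (b3 * b4 * b3⁻¹) * (b1 * b4 * b1⁻¹))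
    (hC1 : (b4 * b1) ^ 2 = (b1 * b4) ^ 2) :
    b4 = b3⁻¹ * b1 * b4 * b3 * b4 * b1 * b4 * b1⁻¹ * b4⁻¹ * b3⁻¹ * b4⁻¹ * b1⁻¹ * b3 := by
  have hword := word_eq_conj_mul_conj_mul_inv hC1 (show Commute b1 b3 from h13)
  rw [Commute.mul_inv_cancel hB13] at hword
  calc b4 = b3⁻¹ * (b3 * b4 * b3⁻¹) * b3 := by group
    _ = b3⁻¹ * b1 * b4 * b3 * b4 * b1 * b4 * b1⁻¹ * b4⁻¹ * b3⁻¹ * b4⁻¹ * b1⁻¹ * b3 := by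
      rw [← hword]; group

theorem stmt_7 (G : Type*) [Group G] (b1 b2 b3 b4 : G)
    (h12 : b1 * b2 = b2 * b1) (h13 : b1 * b3 = b3 * b1) (h23 : b2 * b3 = b3 * b2)
    (hB12 : (b1 * b4 * b1⁻¹) * (b2 * b4 * b2⁻¹) = (b2 * b4 * b2⁻¹) * (b1 * b4 * b1⁻¹))
    (hB13 : (b1 * b4 * b1⁻¹) * (b3 * b4 * b3⁻¹) = (b3 * b4 * b3⁻¹) * (b1 * b4 * b1⁻¹))
    (hB23 : (b2 * b4 * b2⁻¹) * (b3 * b4 * b3⁻¹) = (b3 * b4 * b3⁻¹) * (b2 * b4 * b2⁻¹))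
    (hC1 : (b4 * b1) ^ 2 = (b1 * b4) ^ 2)
    (hC2 : (b4 * b2) ^ 2 = (b2 * b4) ^ 2)
    (hC3 : (b4 * b3) ^ 2 = (b3 * b4) ^ 2) :
    b4 = b3⁻¹ * b1 * b4 * b3 * b4 * b1 * b4 * b1⁻¹ * b4⁻¹ * b3⁻¹ * b4⁻¹ * b1⁻¹ * b3 :=
  stmt_7_general G b1 b3 b4 h13 hB13 hC1
end

section
/- Let G be a group and b1, b2, b3, b4 ∈ G satisfying: [bi, bj] = 1 for all 1 ≤ i < j ≤ 3; [bi*b4*bi⁻¹, bj*b4*bj⁻¹] = 1 for all 1 ≤ i < j ≤ 3; and (b4*bk)^2 = (bk*b4)^2 for k = 1, 2, 3. Then b2 commutes with b4*b3*b4*b2*b4*b3*b4, i.e. b2*(b4*b3*b4*b2*b4*b3*b4) = (b4*b3*b4*b2*b4*b3*b4)*b2. -/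
/-!
With `x = b2`, `y = b3`, `t = b4`, relation (C) says exactly that `x` commutes with `t x t` and
`y` with `t y t`, and the claim says that `(x · tyt)² = (tyt · x)²`. Both squares are rotations
of the cyclic word `(x t y t)²`, and they are connected through a third rotation, `(txt · y)²`.
-/

theorem commute_mul_mul_of_sq_eq_sq {G : Type*} [Group G] {a b : G}
    (h : (b * a) ^ 2 = (a * b) ^ 2) : Commute a (b * a * b) := by
  simpa only [Commute, SemiconjBy, sq, mul_assoc] using h.symm

section
variable {G : Type*} [Group G] {x y t : G}
  (hxy : Commute x y) (hB : Commute (x * t * x⁻¹) (y * t * y⁻¹))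
  (hx : Commute x (t * x * t)) (hy : Commute y (t * y * t))
include hxy hB hx hy

theorem sq_x_tyt_eq_sq_txt_y : (x * (t * y * t)) ^ 2 = (t * x * t * y) ^ 2 :=
  calc (x * (t * y * t)) ^ 2
    _ = x * t * y * t * x * (y⁻¹ * (t * y * t) * y) := by rw [hy.inv_mul_cancel, sq]; group
    _ = x * t * y * t * (y⁻¹ * x) * t * y * t * y := by rw [← hxy.inv_right.eq]; group
    _ = x * t * (y * t * y⁻¹ * (x * t * x⁻¹)) * x * y * t * y := by group
    _ = x * t * x * t * x⁻¹ * y * t * (y⁻¹ * x * y) * t * y := by rw [← hB.eq]; group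
    _ = x * (t * x * t) * x⁻¹ * y * t * x * t * y := by rw [hxy.symm.inv_mul_cancel]; group
    _ = (t * x * t * y) ^ 2 := by rw [hx.mul_inv_cancel, sq]; group

theorem sq_txt_y_eq_sq_tyt_x : (t * x * t * y) ^ 2 = (t * y * t * x) ^ 2 :=
  calc (t * x * t * y) ^ 2
    _ = t * (y * x * y⁻¹) * (t * y * t) * x * t * y := by rw [hxy.symm.mul_inv_cancel, sq]; group
    _ = t * y * x * (t * y * t * y⁻¹) * x * t * y := by rw [← hy.inv_left.eq]; group
    _ = t * y * x * t * (x * t * x⁻¹ * (y * t * y⁻¹)) * x * y := by rw [hB.eq]; group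
    _ = t * y * (t * x * t) * y * t * (y⁻¹ * x * y) := by rw [← hx.mul_inv_cancel]; group
    _ = (t * y * t * x) ^ 2 := by rw [hxy.symm.inv_mul_cancel, sq]; group

theorem commute_x_tytxtyt : Commute x (t * y * t * x * t * y * t) :=
  calc x * (t * y * t * x * t * y * t)
    _ = (x * (t * y * t)) ^ 2 := by rw [sq]; group
    _ = (t * x * t * y) ^ 2 := sq_x_tyt_eq_sq_txt_y hxy hB hx hy
    _ = (t * y * t * x) ^ 2 := sq_txt_y_eq_sq_tyt_x hxy hB hx hy
    _ = t * y * t * x * t * y * t * x := by rw [sq]; group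

end

theorem stmt_8_general (G : Type*) [Group G] (b2 b3 b4 : G)
    (h23 : b2 * b3 = b3 * b2)
    (hB23 : (b2 * b4 * b2⁻¹) * (b3 * b4 * b3⁻¹) = (b3 * b4 * b3⁻¹) * (b2 * b4 * b2⁻¹))
    (hC2 : (b4 * b2) ^ 2 = (b2 * b4) ^ 2)
    (hC3 : (b4 * b3) ^ 2 = (b3 * b4) ^ 2) :
    b2 * (b4 * b3 * b4 * b2 * b4 * b3 * b4) = (b4 * b3 * b4 * b2 * b4 * b3 * b4) * b2 :=
  commute_x_tytxtyt h23 hB23 (commute_mul_mul_of_sq_eq_sq hC2) (commute_mul_mul_of_sq_eq_sq hC3)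

theorem stmt_8 (G : Type*) [Group G] (b1 b2 b3 b4 : G)
    (h12 : b1 * b2 = b2 * b1) (h13 : b1 * b3 = b3 * b1) (h23 : b2 * b3 = b3 * b2)
    (hB12 : (b1 * b4 * b1⁻¹) * (b2 * b4 * b2⁻¹) = (b2 * b4 * b2⁻¹) * (b1 * b4 * b1⁻¹))
    (hB13 : (b1 * b4 * b1⁻¹) * (b3 * b4 * b3⁻¹) = (b3 * b4 * b3⁻¹) * (b1 * b4 * b1⁻¹))
    (hB23 : (b2 * b4 * b2⁻¹) * (b3 * b4 * b3⁻¹) = (b3 * b4 * b3⁻¹) * (b2 * b4 * b2⁻¹))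
    (hC1 : (b4 * b1) ^ 2 = (b1 * b4) ^ 2)
    (hC2 : (b4 * b2) ^ 2 = (b2 * b4) ^ 2)
    (hC3 : (b4 * b3) ^ 2 = (b3 * b4) ^ 2) :
    b2 * (b4 * b3 * b4 * b2 * b4 * b3 * b4) = (b4 * b3 * b4 * b2 * b4 * b3 * b4) * b2 :=
  stmt_8_general G b2 b3 b4 h23 hB23 hC2 hC3
end

section
/- Let G be a group and b1, b2, b3, b4 ∈ G satisfying: [bi, bj] = 1 for all 1 ≤ i < j ≤ 3; [bi*b4*bi⁻¹, bj*b4*bj⁻¹] = 1 for all 1 ≤ i < j ≤ 3; and (b4*bk)^2 = (bk*b4)^2 for k = 1, 2, 3. Then [b4*b2*b4*b3*b4*b2*b4, b3] = 1. -/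
open scoped commutatorElement

/-!
Write `b = a s a` and `e = a t a`. The relation `(a s)² = (s a)²` says exactly that `b` commutes
with `s`, and likewise `e` commutes with `t`. Together with `s t = t s` and the commutation of the
conjugates `s a s⁻¹`, `t a t⁻¹`, this yields `(b t)² = (e s)²`. The right-hand side commutes with `t`,
hence so does `(b t)² = (b t b) t`, and therefore so does `b t b = a s a t a s a`.
-/

section

variable {G : Type*} [Group G] {a s t : G}

theorem mul_sq_eq_mul_sq_iff_commute : (a * s) ^ 2 = (s * a) ^ 2 ↔ Commute (a * s * a) s := by
  simp only [sq, Commute, SemiconjBy, mul_assoc]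

theorem mul_conj_inv_swap_of_commute_conj (hst : Commute s t)
    (hconj : Commute (s * a * s⁻¹) (t * a * t⁻¹)) :
    s * a * t * (s⁻¹ * a * s) = t * a * s * (t⁻¹ * a * t) :=
  calc s * a * t * (s⁻¹ * a * s)
      = s * a * (t * s⁻¹) * a * s := by group
    _ = s * a * (s⁻¹ * t) * a * s := by rw [← hst.inv_left.eq]
    _ = (s * a * s⁻¹) * (t * a * t⁻¹) * (t * s) := by group
    _ = (t * a * t⁻¹) * (s * a * s⁻¹) * (s * t) := by rw [hconj.eq, hst.eq]
    _ = t * a * (t⁻¹ * s) * a * t := by group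
    _ = t * a * (s * t⁻¹) * a * t := by rw [hst.inv_right.eq]
    _ = t * a * s * (t⁻¹ * a * t) := by group

theorem mul_mul_swap_of_commute_conj (hst : Commute s t)
    (hconj : Commute (s * a * s⁻¹) (t * a * t⁻¹))
    (hs : Commute (a * s * a) s) (ht : Commute (a * t * a) t) :
    s * a * t * a * s * a * t = t * a * s * a * t * a * s :=
  calc s * a * t * a * s * a * t
      = s * a * t * (s⁻¹ * (s * (a * s * a))) * t := by group
    _ = s * a * t * (s⁻¹ * a * s) * (a * s * t) := by rw [← hs.eq]; group
    _ = t * a * s * (t⁻¹ * a * t) * (a * s * t) := by rw [mul_conj_inv_swap_of_commute_conj hst hconj]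
    _ = t * a * s * (t⁻¹ * ((a * t * a) * (s * t))) := by group
    _ = t * a * s * (t⁻¹ * ((a * t * a) * t) * s) := by rw [hst.eq]; group
    _ = t * a * s * a * t * a * s := by rw [ht.eq]; group

theorem commute_mul_mul_of_commute_conj (hst : Commute s t)
    (hconj : Commute (s * a * s⁻¹) (t * a * t⁻¹))
    (hs : Commute (a * s * a) s) (ht : Commute (a * t * a) t) :
    Commute (a * s * a * t * a * s * a) t := by
  have hes : Commute (a * t * a * s) t := ht.mul_left hst
  have hsq : a * s * a * t * a * s * a * t = a * t * a * s * (a * t * a * s) :=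
    calc a * s * a * t * a * s * a * t = a * (s * a * t * a * s * a * t) := by group
      _ = a * (t * a * s * a * t * a * s) := by rw [mul_mul_swap_of_commute_conj hst hconj hs ht]
      _ = a * t * a * s * (a * t * a * s) := by group
  have hcomm : Commute (a * s * a * t * a * s * a * t) t := hsq ▸ hes.mul_left hes
  simpa only [mul_inv_cancel_right] using hcomm.mul_left (Commute.refl t).inv_left

end

theorem stmt_9_general (G : Type*) [Group G] (b2 b3 b4 : G)
    (h23 : b2 * b3 = b3 * b2)
    (hB23 : (b2 * b4 * b2⁻¹) * (b3 * b4 * b3⁻¹) = (b3 * b4 * b3⁻¹) * (b2 * b4 * b2⁻¹))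
    (hC2 : (b4 * b2) ^ 2 = (b2 * b4) ^ 2)
    (hC3 : (b4 * b3) ^ 2 = (b3 * b4) ^ 2) :
    ⁅b4 * b2 * b4 * b3 * b4 * b2 * b4, b3⁆ = 1 :=
  commutatorElement_eq_one_iff_commute.mpr <| commute_mul_mul_of_commute_conj h23 hB23
    (mul_sq_eq_mul_sq_iff_commute.mp hC2) (mul_sq_eq_mul_sq_iff_commute.mp hC3)

theorem stmt_9 (G : Type*) [Group G] (b1 b2 b3 b4 : G)
    (h12 : b1 * b2 = b2 * b1) (h13 : b1 * b3 = b3 * b1) (h23 : b2 * b3 = b3 * b2)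
    (hB12 : (b1 * b4 * b1⁻¹) * (b2 * b4 * b2⁻¹) = (b2 * b4 * b2⁻¹) * (b1 * b4 * b1⁻¹))
    (hB13 : (b1 * b4 * b1⁻¹) * (b3 * b4 * b3⁻¹) = (b3 * b4 * b3⁻¹) * (b1 * b4 * b1⁻¹))
    (hB23 : (b2 * b4 * b2⁻¹) * (b3 * b4 * b3⁻¹) = (b3 * b4 * b3⁻¹) * (b2 * b4 * b2⁻¹))
    (hC1 : (b4 * b1) ^ 2 = (b1 * b4) ^ 2)
    (hC2 : (b4 * b2) ^ 2 = (b2 * b4) ^ 2)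
    (hC3 : (b4 * b3) ^ 2 = (b3 * b4) ^ 2) :
    ⁅b4 * b2 * b4 * b3 * b4 * b2 * b4, b3⁆ = 1 :=
  stmt_9_general G b2 b3 b4 h23 hB23 hC2 hC3
end

section
/- Let n ≥ 2 and let r1, ..., r_{n-1} be positive real numbers satisfying r_{n-1} < 1/4 and r_k < r_{k+1}/4 for 1 ≤ k ≤ n-2. For a = (a1,...,a_{n-1}) ∈ {0,1}^{n-1} define t_a = (1 - ∑_{k=1}^{n-1} (-1)^{a_k} √(r_k))². Then t_a < t_{a'} if and only if there exists an index r such that a_i = a'_i for all i = r+1, ..., n-1, a_r = 0, and a'_r = 1. -/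
/-!
With `s k = √(r k)` the hypotheses say `2 s k < s (k+1)` and `2 s (n-1) < 1`, so `s` is
superincreasing: each term exceeds the sum of all earlier ones. For a superincreasing sequence
the signed sums `∑ ± s k` are ordered by the sign at the largest index where the two sign
patterns differ, since that term outweighs everything below it. The signed sums are also at
most `∑ s k ≤ 2 s (n-1) < 1`, so `1 - ∑ ± s k` is positive and squaring preserves the order.
-/

open Finset

noncomputable def signedSum (s : ℕ → ℝ) (N : ℕ) (a : ℕ → Bool) : ℝ :=
  ∑ k ∈ Icc 1 N, (if a k then (-1 : ℝ) else 1) * s k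

def IsSuperincreasing (s : ℕ → ℝ) (N : ℕ) : Prop :=
  ∀ j, j + 1 ≤ N → ∑ k ∈ Icc 1 j, s k < s (j + 1)

section Superincreasing

variable {s : ℕ → ℝ} {N : ℕ}

theorem isSuperincreasing_of_two_mul_lt (hpos : ∀ k, 1 ≤ k → k ≤ N → 0 < s k)
    (hdouble : ∀ k, 1 ≤ k → k + 1 ≤ N → 2 * s k < s (k + 1)) : IsSuperincreasing s N := by
  intro j
  induction j with
  | zero => intro h; simpa using hpos 1 le_rfl h
  | succ j ih =>
    intro h
    rw [sum_Icc_succ_top (by omega)]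
    linarith [ih (by omega), hdouble (j + 1) (by omega) h]

theorem sum_Icc_le_two_mul (hs : ∀ k, 0 ≤ s k) (hsup : IsSuperincreasing s N) :
    ∑ k ∈ Icc 1 N, s k ≤ 2 * s N := by
  cases N with
  | zero => simpa using hs 0
  | succ j =>
    rw [sum_Icc_succ_top (by omega)]
    linarith [hsup j le_rfl]

theorem signedSum_le_sum (hs : ∀ k, 0 ≤ s k) (a : ℕ → Bool) :
    signedSum s N a ≤ ∑ k ∈ Icc 1 N, s k :=
  sum_le_sum fun k _ => by cases a k <;> simp [hs k]

theorem signedSum_lt_signedSum (hs : ∀ k, 0 ≤ s k) (hsup : IsSuperincreasing s N)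
    {a a' : ℕ → Bool} {m : ℕ} (hm1 : 1 ≤ m) (hmN : m ≤ N)
    (hagree : ∀ i, m + 1 ≤ i → i ≤ N → a i = a' i) (ha : a m = false) (ha' : a' m = true) :
    signedSum s N a' < signedSum s N a := by
  set d : ℕ → ℝ := fun k =>
    ((if a k then (-1 : ℝ) else 1) - (if a' k then (-1 : ℝ) else 1)) * s k with hd
  have hdiff : signedSum s N a - signedSum s N a' = ∑ k ∈ Icc 1 m, d k := by
    rw [signedSum, signedSum, ← sum_sub_distrib, ← sum_subset (Icc_subset_Icc_right hmN)]
    · exact sum_congr rfl fun k _ => by ring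
    · intro k hk hkm
      simp only [mem_Icc] at hk hkm
      simp [hagree k (by omega) hk.2]
  obtain ⟨j, rfl⟩ : ∃ j, m = j + 1 := ⟨m - 1, by omega⟩
  have htop : d (j + 1) = 2 * s (j + 1) := by simp only [hd, ha, ha']; norm_num
  have hlow : -(2 * ∑ k ∈ Icc 1 j, s k) ≤ ∑ k ∈ Icc 1 j, d k := by
    rw [mul_sum, ← sum_neg_distrib]
    exact sum_le_sum fun k _ => by
      simp only [hd]
      cases a k <;> cases a' k <;> norm_num <;> linarith [hs k]
  rw [sum_Icc_succ_top (by omega), htop] at hdiff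
  linarith [hsup j hmN]

theorem signedSum_lt_iff (hs : ∀ k, 0 ≤ s k) (hsup : IsSuperincreasing s N) (a a' : ℕ → Bool) :
    signedSum s N a' < signedSum s N a ↔ ∃ m, 1 ≤ m ∧ m ≤ N ∧
      (∀ i, m + 1 ≤ i → i ≤ N → a i = a' i) ∧ a m = false ∧ a' m = true := by
  refine ⟨fun hlt => ?_, fun ⟨m, hm1, hmN, hagree, ha, ha'⟩ =>
    signedSum_lt_signedSum hs hsup hm1 hmN hagree ha ha'⟩
  have hne : ((Icc 1 N).filter fun k => a k ≠ a' k).Nonempty := by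
    by_contra hempty
    simp only [filter_nonempty_iff, not_exists, not_and, not_not] at hempty
    exact hlt.ne (sum_congr rfl fun k hk => by rw [hempty k hk])
  obtain ⟨m, hm, hmax⟩ := exists_max_image _ id hne
  simp only [mem_filter, mem_Icc, id] at hm hmax
  obtain ⟨⟨hm1, hmN⟩, hdiffer⟩ := hm
  have hagree : ∀ i, m + 1 ≤ i → i ≤ N → a i = a' i := fun i hi hiN => by
    by_contra h
    have := hmax i ⟨⟨by omega, hiN⟩, h⟩
    omega
  cases ha : a m <;> cases ha' : a' m <;> simp only [ha, ha', ne_eq, not_true_eq_false] at hdiffer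
  · exact ⟨m, hm1, hmN, hagree, ha, ha'⟩
  · exact absurd hlt (signedSum_lt_signedSum hs hsup hm1 hmN
      (fun i hi hiN => (hagree i hi hiN).symm) ha' ha).asymm

end Superincreasing

theorem sq_one_sub_lt_sq_one_sub_iff {x y : ℝ} (hx : x ≤ 1) (hy : y ≤ 1) :
    (1 - x) ^ 2 < (1 - y) ^ 2 ↔ y < x := by
  rw [sq_lt_sq₀ (by linarith) (by linarith)]
  constructor <;> intro h <;> linarith

theorem stmt_13_general (n : ℕ) (r : ℕ → ℝ)
    (hpos : ∀ k, 1 ≤ k → k ≤ n - 1 → 0 < r k)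
    (hlast : r (n - 1) < 1 / 4)
    (hdec : ∀ k, 1 ≤ k → k ≤ n - 2 → r k < r (k + 1) / 4)
    (a a' : ℕ → Bool) :
    (1 - ∑ k ∈ Finset.Icc 1 (n - 1),
        (if a k then (-1 : ℝ) else 1) * Real.sqrt (r k)) ^ 2
      < (1 - ∑ k ∈ Finset.Icc 1 (n - 1),
        (if a' k then (-1 : ℝ) else 1) * Real.sqrt (r k)) ^ 2
    ↔ ∃ m, 1 ≤ m ∧ m ≤ n - 1 ∧ (∀ i, m + 1 ≤ i → i ≤ n - 1 → a i = a' i)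
        ∧ a m = false ∧ a' m = true := by
  have hs : ∀ k, 0 ≤ Real.sqrt (r k) := fun k => Real.sqrt_nonneg _
  have hsup : IsSuperincreasing (fun k => Real.sqrt (r k)) (n - 1) :=
    isSuperincreasing_of_two_mul_lt (fun k h1 h2 => Real.sqrt_pos.2 (hpos k h1 h2))
      fun k h1 h2 => (Real.lt_sqrt (by positivity)).2 <| by
        rw [mul_pow, Real.sq_sqrt (hpos k h1 (by omega)).le]
        linarith [hdec k h1 (by omega)]
  have hhalf : Real.sqrt (r (n - 1)) < 1 / 2 := (Real.sqrt_lt' (by norm_num)).2 (by linarith)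
  have hle : ∀ b, signedSum (fun k => Real.sqrt (r k)) (n - 1) b ≤ 1 := fun b =>
    (signedSum_le_sum hs b).trans <| (sum_Icc_le_two_mul hs hsup).trans (by linarith)
  exact (sq_one_sub_lt_sq_one_sub_iff (hle a) (hle a')).trans (signedSum_lt_iff hs hsup a a')

theorem stmt_13 (n : ℕ) (hn : 2 ≤ n) (r : ℕ → ℝ)
    (hpos : ∀ k, 1 ≤ k → k ≤ n - 1 → 0 < r k)
    (hlast : r (n - 1) < 1 / 4)
    (hdec : ∀ k, 1 ≤ k → k ≤ n - 2 → r k < r (k + 1) / 4)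
    (a a' : ℕ → Bool) :
    (1 - ∑ k ∈ Finset.Icc 1 (n - 1),
        (if a k then (-1 : ℝ) else 1) * Real.sqrt (r k)) ^ 2
      < (1 - ∑ k ∈ Finset.Icc 1 (n - 1),
        (if a' k then (-1 : ℝ) else 1) * Real.sqrt (r k)) ^ 2
    ↔ ∃ m, 1 ≤ m ∧ m ≤ n - 1 ∧ (∀ i, m + 1 ≤ i → i ≤ n - 1 → a i = a' i)
        ∧ a m = false ∧ a' m = true :=
  stmt_13_general n r hpos hlast hdec a a'
end

section
/- Let G be a group and let x, y, z, w, u ∈ G satisfy the relations z*x*y = y*z*x = x*y*z (i.e., λ0^{(i)} λi λ0 = λ0 λ0^{(i)} λi = λi λ0 λ0^{(i)} with x = λi, y = λ0, z = λ0^{(i)}), u*z*w = w*u*z = z*w*u (i.e., λj λ0^{(i)} λ0^{(ij)} = λ0^{(ij)} λj λ0^{(i)} with u = λj, w = λ0^{(ij)}), and [w, x*y*x⁻¹] = 1. Then [w, u*y*u⁻¹] = 1. -/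
/-! Both hypotheses of the form `c * a * b = b * c * a` say that `b` commutes with `c * a`, so
`c⁻¹ * b * c = a * b * a⁻¹`. Hence `x * y * x⁻¹ = z⁻¹ * y * z` and `u⁻¹ * w * u = z * w * z⁻¹`.
Conjugating `[w, z⁻¹ * y * z] = 1` by `z` gives `[u⁻¹ * w * u, y] = 1`, and conjugating
that by `u` gives the claim. -/

open scoped commutatorElement

theorem inv_mul_mul_eq_mul_mul_inv_of_commute {G : Type*} [Group G] {a b c : G}
    (h : Commute (c * a) b) : c⁻¹ * b * c = a * b * a⁻¹ :=
  calc c⁻¹ * b * c = c⁻¹ * (b * (c * a)) * a⁻¹ := by group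
    _ = c⁻¹ * (c * a * b) * a⁻¹ := by rw [h.eq]
    _ = a * b * a⁻¹ := by group

theorem stmt_18_general (G : Type*) [Group G] (x y z w u : G)
    (h1 : z * x * y = y * z * x)
    (h2 : u * z * w = w * u * z)
    (h3 : ⁅w, x * y * x⁻¹⁆ = 1) :
    ⁅w, u * y * u⁻¹⁆ = 1 := by
  have hx : z⁻¹ * y * z = x * y * x⁻¹ :=
    inv_mul_mul_eq_mul_mul_inv_of_commute (h1.trans (mul_assoc _ _ _))
  have hu : u⁻¹ * w * u = z * w * z⁻¹ :=
    inv_mul_mul_eq_mul_mul_inv_of_commute (h2.trans (mul_assoc _ _ _))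
  have hwy : Commute w (z⁻¹ * y * z) := hx ▸ commutatorElement_eq_one_iff_commute.mp h3
  have hwy' : Commute (u⁻¹ * w * u) y := by
    simpa only [hu, mul_assoc, mul_inv_cancel_left, mul_inv_cancel, mul_one] using hwy.conj z
  rw [commutatorElement_eq_one_iff_commute]
  simpa only [mul_assoc, mul_inv_cancel_left, mul_inv_cancel, mul_one] using hwy'.conj u

theorem stmt_18 (G : Type*) [Group G] (x y z w u : G)
    (h1 : z * x * y = y * z * x) (h1' : y * z * x = x * y * z)
    (h2 : u * z * w = w * u * z) (h2' : w * u * z = z * w * u)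
    (h3 : ⁅w, x * y * x⁻¹⁆ = 1) :
    ⁅w, u * y * u⁻¹⁆ = 1 :=
  stmt_18_general G x y z w u h1 h2 h3
end
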